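/- arXiv:1810.11505 — 7 statements merged into one kernel-verified Lean document; each statement's English description precedes it below -/
import Mathlib

section
/- Let B ⊆ ℝⁿ be a nonempty open convex set and let f : ℝⁿ → ℝᵐ be differentiable on B such that ξ̲_{ij} ≤ ∂f_i/∂x_j(x) ≤ ξ̄_{ij} for all x ∈ B, i ∈ {1,…,m}, j ∈ {1,…,n}. Then for every pair x, y ∈ B there exists q ∈ ℝ^{m×n} such that f_i(x) − f_i(y) = Σ_{j=1}^n q_{ij} for every i ∈ {1,…,m}, and for every choice of nonnegative multipliers λ_{ij} ≥ 0 the inequality Σ_{i=1}^m Σ_{j=1}^n λ_{ij} ( (c̄_{ij}² − c_{ij}²)(x_j − y_j)² + 2 c_{ij} q_{ij} (x_j − y_j) − q_{ij}² ) ≥ 0 holds. -/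
/-!
On the segment from `y` to `x`, the mean value theorem applied to the component `f i` gives a
point `zᵢ` with `f x i - f y i = ∑ j, (x j - y j) * ∂ⱼfᵢ(zᵢ)`, so we take
`q i j = (x j - y j) * ∂ⱼfᵢ(zᵢ)`. By convexity `zᵢ ∈ B`, so `a = ∂ⱼfᵢ(zᵢ) ∈ [ξ̲ᵢⱼ, ξ̄ᵢⱼ]`, and each
summand of the constraint is `λᵢⱼ (ξ̄ᵢⱼ - a) (a - ξ̲ᵢⱼ) (x j - y j)² ≥ 0`.
-/

open Finset

theorem quadratic_constraint_eq_mul (lo hi d a : ℝ) :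
    ((hi - (lo + hi) / 2) ^ 2 - ((lo + hi) / 2) ^ 2) * d ^ 2
        + 2 * ((lo + hi) / 2) * (d * a) * d - (d * a) ^ 2
      = (hi - a) * (a - lo) * d ^ 2 := by
  ring

theorem quadratic_constraint_nonneg {lo hi a : ℝ} (hlo : lo ≤ a) (hhi : a ≤ hi) (d : ℝ) :
    0 ≤ ((hi - (lo + hi) / 2) ^ 2 - ((lo + hi) / 2) ^ 2) * d ^ 2
        + 2 * ((lo + hi) / 2) * (d * a) * d - (d * a) ^ 2 := by
  rw [quadratic_constraint_eq_mul]
  have := sub_nonneg.2 hhi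
  have := sub_nonneg.2 hlo
  positivity

theorem exists_mem_segment_apply_sub_eq_sum_fderiv {ι κ : Type*} [Fintype ι] [DecidableEq ι]
    [Fintype κ] {f : (ι → ℝ) → κ → ℝ} {s : Set (ι → ℝ)} (hs : Convex ℝ s)
    (hf : ∀ z ∈ s, DifferentiableAt ℝ f z) {x y : ι → ℝ} (hx : x ∈ s) (hy : y ∈ s) (k : κ) :
    ∃ z ∈ segment ℝ y x, f x k - f y k = ∑ j, (x j - y j) * fderiv ℝ f z (Pi.single j 1) k := by
  let πk : (κ → ℝ) →L[ℝ] ℝ := ContinuousLinearMap.proj k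
  have hfk : ∀ z ∈ s, HasFDerivWithinAt (fun z ↦ f z k) (πk.comp (fderiv ℝ f z)) s z :=
    fun z hz ↦ (πk.hasFDerivAt.comp z (hf z hz).hasFDerivAt).hasFDerivWithinAt
  obtain ⟨z, hz, hmvt⟩ := domain_mvt hfk hs hy hx
  refine ⟨z, hz, hmvt.trans ?_⟩
  conv_lhs => rw [pi_eq_sum_univ' (x - y)]
  simp [πk, map_sum, map_smul]

theorem gradient_bounded_quadratic_constraint_general
    (n m : ℕ)
    (ξlo ξhi : Fin m → Fin n → ℝ)
    (B : Set (Fin n → ℝ))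
    (hBconv : Convex ℝ B)
    (f : (Fin n → ℝ) → (Fin m → ℝ))
    (hdiff : ∀ x ∈ B, DifferentiableAt ℝ f x)
    (hgrad : ∀ x ∈ B, ∀ i j,
      ξlo i j ≤ fderiv ℝ f x (Pi.single j 1) i ∧
      fderiv ℝ f x (Pi.single j 1) i ≤ ξhi i j) :
    ∀ x ∈ B, ∀ y ∈ B, ∃ q : Fin m → Fin n → ℝ,
      (∀ i, f x i - f y i = ∑ j, q i j) ∧
      (∀ lam : Fin m → Fin n → ℝ, (∀ i j, 0 ≤ lam i j) →
        0 ≤ ∑ i, ∑ j, lam i j *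
          (((ξhi i j - (ξlo i j + ξhi i j) / 2) ^ 2 -
              ((ξlo i j + ξhi i j) / 2) ^ 2) * (x j - y j) ^ 2
            + 2 * ((ξlo i j + ξhi i j) / 2) * q i j * (x j - y j)
            - (q i j) ^ 2)) := by
  intro x hx y hy
  choose z hz hfz using exists_mem_segment_apply_sub_eq_sum_fderiv hBconv hdiff hx hy
  have hzB : ∀ i, z i ∈ B := fun i ↦ hBconv.segment_subset hy hx (hz i)
  refine ⟨fun i j ↦ (x j - y j) * fderiv ℝ f (z i) (Pi.single j 1) i, hfz, fun lam hlam ↦ ?_⟩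
  refine sum_nonneg fun i _ ↦ sum_nonneg fun j _ ↦ mul_nonneg (hlam i j) ?_
  obtain ⟨hlo, hhi⟩ := hgrad (z i) (hzB i) i j
  exact quadratic_constraint_nonneg hlo hhi (x j - y j)

/-- Lemma 3.1, scalar weighted-sum form: for a differentiable
function with entrywise gradient bounds on a nonempty open convex set `B`, for
every `x, y ∈ B` there exists `q ∈ ℝ^{m×n}` with `f_i x - f_i y = ∑ j, q i j`,
and the weighted quadratic constraint holds for all nonnegative multipliers,
where `c i j = (ξlo i j + ξhi i j)/2` and `cbar i j = ξhi i j - c i j`. -/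
theorem gradient_bounded_quadratic_constraint
    (n m : ℕ) (hn : 0 < n) (hm : 0 < m)
    (ξlo ξhi : Fin m → Fin n → ℝ)
    (hξ : ∀ i j, ξlo i j ≤ ξhi i j)
    (B : Set (Fin n → ℝ)) (hBne : B.Nonempty) (hBopen : IsOpen B)
    (hBconv : Convex ℝ B)
    (f : (Fin n → ℝ) → (Fin m → ℝ))
    (hdiff : ∀ x ∈ B, DifferentiableAt ℝ f x)
    (hgrad : ∀ x ∈ B, ∀ i j,
      ξlo i j ≤ fderiv ℝ f x (Pi.single j 1) i ∧
      fderiv ℝ f x (Pi.single j 1) i ≤ ξhi i j) :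
    ∀ x ∈ B, ∀ y ∈ B, ∃ q : Fin m → Fin n → ℝ,
      (∀ i, f x i - f y i = ∑ j, q i j) ∧
      (∀ lam : Fin m → Fin n → ℝ, (∀ i j, 0 ≤ lam i j) →
        0 ≤ ∑ i, ∑ j, lam i j *
          (((ξhi i j - (ξlo i j + ξhi i j) / 2) ^ 2 -
              ((ξlo i j + ξhi i j) / 2) ^ 2) * (x j - y j) ^ 2
            + 2 * ((ξlo i j + ξhi i j) / 2) * q i j * (x j - y j)
            - (q i j) ^ 2)) :=
  gradient_bounded_quadratic_constraint_general n m ξlo ξhi B hBconv f hdiff hgrad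
end

section
/- Let π : ℝⁿ → ℝᵐ be differentiable on ℝⁿ with π(0) = 0 and ξ̲_{ij} ≤ ∂π_i/∂x_j(y) ≤ ξ̄_{ij} for all y ∈ ℝⁿ, i ∈ {1,…,m}, j ∈ {1,…,n}. Then there exist functions π̃_{ij} : ℝⁿ → ℝ (i ∈ {1,…,m}, j ∈ {1,…,n}) such that for every y ∈ ℝⁿ: (a) π_i(y) = Σ_{j=1}^n π̃_{ij}(y) for every i; (b) π̃_{ij}(y) = 0 whenever y_j = 0; and (c) whenever y_j ≠ 0, the ratio π̃_{ij}(y)/y_j lies in the interval [ξ̲_{ij}, ξ̄_{ij}]. -/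
/-!
Write `y` as the end of a path `y = y⁰, y¹, …, yⁿ = 0`, where `yᵏ` is `y` with its first `k`
coordinates set to zero, and let `π̃ᵢⱼ(y) = πᵢ(yʲ) - πᵢ(yʲ⁺¹)`. The sum over `j` telescopes to
`πᵢ(y) - πᵢ(0) = πᵢ(y)`. Consecutive hybrid vectors differ only in coordinate `j`, by `yⱼ`, so
`π̃ᵢⱼ(y)` vanishes when `yⱼ = 0`, and otherwise the mean value theorem on the segment between them
makes `π̃ᵢⱼ(y) / yⱼ` a value of `∂πᵢ/∂xⱼ`, hence a number in `[ξ̲ᵢⱼ, ξ̄ᵢⱼ]`.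
-/

open Set

section MeanValue

variable {E : Type*} [NormedAddCommGroup E] [NormedSpace ℝ E]

theorem div_sub_mem_Icc_of_fderiv_apply_mem_Icc {f : E → ℝ} (hf : Differentiable ℝ f)
    {v : E} {lo hi : ℝ} (hbound : ∀ z, fderiv ℝ f z v ∈ Icc lo hi) (b : E) {s : ℝ}
    (hs : s ≠ 0) : (f (b + s • v) - f b) / s ∈ Icc lo hi := by
  obtain ⟨z, -, hz⟩ := domain_mvt (fun x _ => (hf x).hasFDerivAt.hasFDerivWithinAt)
    convex_univ (mem_univ b) (mem_univ (b + s • v))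
  rw [hz, add_sub_cancel_left, map_smul, smul_eq_mul, mul_div_cancel_left₀ _ hs]
  exact hbound z

end MeanValue

section ZeroFirst

variable {n : ℕ} {M : Type*}

def zeroFirst [Zero M] (k : ℕ) (y : Fin n → M) : Fin n → M :=
  fun j => if k ≤ j then y j else 0

@[simp]
theorem zeroFirst_zero [Zero M] (y : Fin n → M) : zeroFirst 0 y = y :=
  funext fun _ => if_pos (Nat.zero_le _)

theorem zeroFirst_eq_zero_of_le [Zero M] {k : ℕ} (hk : n ≤ k) (y : Fin n → M) :
    zeroFirst k y = 0 :=
  funext fun j => if_neg (by omega)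

theorem zeroFirst_eq_add_single [AddMonoid M] (j : Fin n) (y : Fin n → M) :
    zeroFirst j y = zeroFirst (j + 1) y + Pi.single j (y j) := by
  funext k
  rcases eq_or_ne k j with rfl | hkj
  · simp [zeroFirst]
  · have hshift : (j : ℕ) ≤ k ↔ (j : ℕ) + 1 ≤ k := by
      have := Fin.val_ne_of_ne hkj
      omega
    simp [zeroFirst, hkj, hshift]

end ZeroFirst

theorem gradient_bounded_sector_decomposition_general
    (n m : ℕ)
    (ξlo ξhi : Fin m → Fin n → ℝ)
    (pol : (Fin n → ℝ) → (Fin m → ℝ))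
    (hdiff : Differentiable ℝ pol) (hpol0 : pol 0 = 0)
    (hgrad : ∀ y : Fin n → ℝ, ∀ i j,
      ξlo i j ≤ fderiv ℝ pol y (Pi.single j 1) i ∧
      fderiv ℝ pol y (Pi.single j 1) i ≤ ξhi i j) :
    ∃ polt : Fin m → Fin n → (Fin n → ℝ) → ℝ,
      ∀ y : Fin n → ℝ,
        (∀ i, pol y i = ∑ j, polt i j y) ∧
        (∀ i j, y j = 0 → polt i j y = 0) ∧
        (∀ i j, y j ≠ 0 → polt i j y / y j ∈ Set.Icc (ξlo i j) (ξhi i j)) := by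
  refine ⟨fun i j y => pol (zeroFirst j y) i - pol (zeroFirst (j + 1) y) i,
    fun y => ⟨fun i => ?_, fun i j hyj => ?_, fun i j hyj => ?_⟩⟩
  · rw [Fin.sum_univ_eq_sum_range (fun k => pol (zeroFirst k y) i - pol (zeroFirst (k + 1) y) i),
      Finset.sum_range_sub', zeroFirst_zero, zeroFirst_eq_zero_of_le le_rfl, hpol0, Pi.zero_apply,
      sub_zero]
  · dsimp only
    rw [zeroFirst_eq_add_single j y, hyj, Pi.single_zero, add_zero, sub_self]
  · have hcomp : Differentiable ℝ fun x => pol x i := differentiable_pi.1 hdiff i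
    have hpartial :
        ∀ z, fderiv ℝ (fun x => pol x i) z (Pi.single j 1) ∈ Icc (ξlo i j) (ξhi i j) := fun z => by
      rw [fderiv_apply (hdiff z)]
      exact hgrad z i j
    have hsegment :=
      div_sub_mem_Icc_of_fderiv_apply_mem_Icc hcomp hpartial (zeroFirst (j + 1) y) hyj
    rwa [← Pi.single_smul', smul_eq_mul, mul_one, ← zeroFirst_eq_add_single] at hsegment

/-- Proposition 3.4 decomposition: a differentiable policy with
`π 0 = 0` and entrywise gradient bounds decomposes as a sum of sector-bounded
components `π̃ i j` with `π̃ i j y = 0` when `y j = 0` and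
`π̃ i j y / y j ∈ [ξlo i j, ξhi i j]` when `y j ≠ 0`. -/
theorem gradient_bounded_sector_decomposition
    (n m : ℕ) (hn : 0 < n) (hm : 0 < m)
    (ξlo ξhi : Fin m → Fin n → ℝ)
    (hξ : ∀ i j, ξlo i j ≤ ξhi i j)
    (pol : (Fin n → ℝ) → (Fin m → ℝ))
    (hdiff : Differentiable ℝ pol) (hpol0 : pol 0 = 0)
    (hgrad : ∀ y : Fin n → ℝ, ∀ i j,
      ξlo i j ≤ fderiv ℝ pol y (Pi.single j 1) i ∧
      fderiv ℝ pol y (Pi.single j 1) i ≤ ξhi i j) :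
    ∃ polt : Fin m → Fin n → (Fin n → ℝ) → ℝ,
      ∀ y : Fin n → ℝ,
        (∀ i, pol y i = ∑ j, polt i j y) ∧
        (∀ i j, y j = 0 → polt i j y = 0) ∧
        (∀ i j, y j ≠ 0 → polt i j y / y j ∈ Set.Icc (ξlo i j) (ξhi i j)) :=
  gradient_bounded_sector_decomposition_general n m ξlo ξhi pol hdiff hpol0 hgrad
end

section
/- Let x ∈ ℝⁿ and q ∈ ℝ^{m×n}. The following are equivalent: (a) for all i ∈ {1,…,m}, j ∈ {1,…,n}, the inequality (c̄_{ij}² − c_{ij}²) x_j² + 2 c_{ij} q_{ij} x_j − q_{ij}² ≥ 0 holds; (b) for all i ∈ {1,…,m}, j ∈ {1,…,n}, there exists δ_{ij} ∈ [c_{ij} − c̄_{ij}, c_{ij} + c̄_{ij}] such that q_{ij} = δ_{ij} x_j (in particular q_{ij} = 0 whenever x_j = 0). -/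
/-!
Completing the square, `φ = (c̄ x)² - (q - c x)²`, so `φ ≥ 0` says `|q - c x| ≤ c̄ |x|`: the
deviation of `q` from `c x` lies in a sector of slope `c̄`. Such a `q` is `δ x` with `|δ - c| ≤ c̄`;
when `x = 0` the sector forces `q = 0` and any `δ` works, and `c̄ ≥ 0` makes the interval nonempty.
-/

section SectorBound

variable {K : Type*} [Field K] [LinearOrder K] [IsStrictOrderedRing K]

theorem abs_le_mul_abs_iff_exists_mul {r x y : K} (hr : 0 ≤ r) :
    |y| ≤ r * |x| ↔ ∃ t, |t| ≤ r ∧ y = t * x := by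
  constructor
  · intro hy
    rcases eq_or_ne x 0 with rfl | hx
    · exact ⟨0, by simpa using hr, by simpa using hy⟩
    · refine ⟨y / x, ?_, (div_mul_cancel₀ y hx).symm⟩
      rwa [abs_div, div_le_iff₀ (abs_pos.2 hx)]
  · rintro ⟨t, ht, rfl⟩
    rw [abs_mul]
    exact mul_le_mul_of_nonneg_right ht (abs_nonneg x)

theorem abs_sub_mul_le_iff_exists_mem_Icc {c r x q : K} (hr : 0 ≤ r) :
    |q - c * x| ≤ r * |x| ↔ ∃ δ ∈ Set.Icc (c - r) (c + r), q = δ * x := by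
  rw [abs_le_mul_abs_iff_exists_mul hr]
  constructor
  · rintro ⟨t, ht, hq⟩
    refine ⟨c + t, Set.mem_Icc_iff_abs_le.1 (by simpa using ht), ?_⟩
    linear_combination hq
  · rintro ⟨δ, hδ, rfl⟩
    exact ⟨δ - c, by rwa [abs_sub_comm, Set.mem_Icc_iff_abs_le], by ring⟩

theorem quadratic_sector_nonneg_iff {c cb x q : K} (hcb : 0 ≤ cb) :
    0 ≤ (cb ^ 2 - c ^ 2) * x ^ 2 + 2 * c * q * x - q ^ 2 ↔
      ∃ δ ∈ Set.Icc (c - cb) (c + cb), q = δ * x := by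
  have hsquare : (cb ^ 2 - c ^ 2) * x ^ 2 + 2 * c * q * x - q ^ 2 =
      (cb * x) ^ 2 - (q - c * x) ^ 2 := by ring
  rw [← abs_sub_mul_le_iff_exists_mem_Icc hcb, hsquare, sub_nonneg, sq_le_sq, abs_mul,
    abs_of_nonneg hcb]

end SectorBound

theorem quadratic_constraint_iff_sector_bounded_general
    (n m : ℕ)
    (ξlo ξhi : Fin m → Fin n → ℝ)
    (hξ : ∀ i j, ξlo i j ≤ ξhi i j)
    (x : Fin n → ℝ) (q : Fin m → Fin n → ℝ) :
    (∀ i j,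
      0 ≤ ((ξhi i j - (ξlo i j + ξhi i j) / 2) ^ 2 -
            ((ξlo i j + ξhi i j) / 2) ^ 2) * (x j) ^ 2
          + 2 * ((ξlo i j + ξhi i j) / 2) * q i j * x j - (q i j) ^ 2)
    ↔ (∀ i j, ∃ δ ∈ Set.Icc
        ((ξlo i j + ξhi i j) / 2 - (ξhi i j - (ξlo i j + ξhi i j) / 2))
        ((ξlo i j + ξhi i j) / 2 + (ξhi i j - (ξlo i j + ξhi i j) / 2)),
        q i j = δ * x j) :=
  forall₂_congr fun i j => quadratic_sector_nonneg_iff (by linarith [hξ i j])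

/-- Lemma 3.5: the pointwise quadratic constraints
`φ_{ij}(x,q) ≥ 0` hold iff each `q i j` is a sector-bounded multiple of `x j`,
where `c i j = (ξlo i j + ξhi i j)/2` and `cbar i j = ξhi i j - c i j`. -/
theorem quadratic_constraint_iff_sector_bounded
    (n m : ℕ) (hn : 0 < n) (hm : 0 < m)
    (ξlo ξhi : Fin m → Fin n → ℝ)
    (hξ : ∀ i j, ξlo i j ≤ ξhi i j)
    (x : Fin n → ℝ) (q : Fin m → Fin n → ℝ) :
    (∀ i j,
      0 ≤ ((ξhi i j - (ξlo i j + ξhi i j) / 2) ^ 2 -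
            ((ξlo i j + ξhi i j) / 2) ^ 2) * (x j) ^ 2
          + 2 * ((ξlo i j + ξhi i j) / 2) * q i j * x j - (q i j) ^ 2)
    ↔ (∀ i j, ∃ δ ∈ Set.Icc
        ((ξlo i j + ξhi i j) / 2 - (ξhi i j - (ξlo i j + ξhi i j) / 2))
        ((ξlo i j + ξhi i j) / 2 + (ξhi i j - (ξlo i j + ξhi i j) / 2)),
        q i j = δ * x j) :=
  quadratic_constraint_iff_sector_bounded_general n m ξlo ξhi hξ x q
end

section
/- Let H be a real inner product space, let c, c̄ ∈ ℝ with c ≤ 0 ≤ c̄, and let x, q ∈ H satisfy (c − c̄)‖x‖ ≤ ‖q‖ ≤ (c + c̄)‖x‖. Then (c̄² − c²)‖x‖² + 2c⟨q, x⟩ − ‖q‖² ≥ 0. -/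
/-!
With `a = ‖x‖` and `b = ‖q‖`, the constraint with `⟨q, x⟩` replaced by `a * b` is
`cbar² a² - (b - c a)² = ((c + cbar) a - b) (b - (c - cbar) a)`, the product of the two slacks of
the sector bound. Since `c ≤ 0`, Cauchy–Schwarz `⟨q, x⟩ ≤ a * b` only increases `2 c ⟨q, x⟩`.
-/

theorem sector_quadratic_nonneg {c cbar a b : ℝ} (hlo : (c - cbar) * a ≤ b)
    (hhi : b ≤ (c + cbar) * a) :
    0 ≤ (cbar ^ 2 - c ^ 2) * a ^ 2 + 2 * c * (a * b) - b ^ 2 := by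
  have hfactor : (cbar ^ 2 - c ^ 2) * a ^ 2 + 2 * c * (a * b) - b ^ 2
      = ((c + cbar) * a - b) * (b - (c - cbar) * a) := by ring
  rw [hfactor]
  exact mul_nonneg (sub_nonneg.2 hhi) (sub_nonneg.2 hlo)

theorem sector_bound_implies_quadratic_constraint_general
    (H : Type*) [NormedAddCommGroup H] [InnerProductSpace ℝ H]
    (c cbar : ℝ) (hc : c ≤ 0) (x q : H)
    (hlo : (c - cbar) * ‖x‖ ≤ ‖q‖) (hhi : ‖q‖ ≤ (c + cbar) * ‖x‖) :
    0 ≤ (cbar ^ 2 - c ^ 2) * ‖x‖ ^ 2 + 2 * c * (inner ℝ q x : ℝ) - ‖q‖ ^ 2 := by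
  have hinner : c * (‖x‖ * ‖q‖) ≤ c * inner ℝ q x :=
    mul_le_mul_of_nonpos_left ((real_inner_le_norm q x).trans_eq (mul_comm _ _)) hc
  linarith [sector_quadratic_nonneg hlo hhi]

/-- sufficiency direction of Lemma 3.6, case `c ≤ 0`: the
sector-bound-in-norm condition `(c − cbar)‖x‖ ≤ ‖q‖ ≤ (c + cbar)‖x‖` implies
the quadratic constraint `(cbar² − c²)‖x‖² + 2c⟨q,x⟩ − ‖q‖² ≥ 0`. -/
theorem sector_bound_implies_quadratic_constraint
    (H : Type*) [NormedAddCommGroup H] [InnerProductSpace ℝ H]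
    (c cbar : ℝ) (hc : c ≤ 0) (hcbar : 0 ≤ cbar) (x q : H)
    (hlo : (c - cbar) * ‖x‖ ≤ ‖q‖) (hhi : ‖q‖ ≤ (c + cbar) * ‖x‖) :
    0 ≤ (cbar ^ 2 - c ^ 2) * ‖x‖ ^ 2 + 2 * c * (inner ℝ q x : ℝ) - ‖q‖ ^ 2 :=
  sector_bound_implies_quadratic_constraint_general H c cbar hc x q hlo hhi
end

section
/- Let n, m be positive integers, A ∈ ℝ^{n×n}, B ∈ ℝ^{n×m}. Let π : ℝⁿ → ℝᵐ be differentiable with π(0) = 0 and ξ̲_{ij} ≤ ∂π_i/∂x_j(x) ≤ ξ̄_{ij} for all x ∈ ℝⁿ, i ∈ {1,…,m}, j ∈ {1,…,n}. Suppose there exist a symmetric positive semidefinite matrix P ∈ ℝ^{n×n}, nonnegative multipliers λ_{ij} ≥ 0, and a scalar γ > 0 such that for every nonzero triple (x, q, e) ∈ ℝⁿ × ℝ^{m×n} × ℝᵐ, writing w ∈ ℝᵐ for the vector with w_i = Σ_{j=1}^n q_{ij}, the strict inequality 2 xᵀ P (A x + B w + B e) + Σ_{i,j} λ_{ij}( (c̄_{ij}²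 − c_{ij}²) x_j² + 2 c_{ij} q_{ij} x_j − q_{ij}² ) + γ⁻¹ |x|² − γ |e|² < 0 holds. Then for every continuous function e : [0,∞) → ℝᵐ and every continuously differentiable trajectory x : [0,∞) → ℝⁿ satisfying x(0) = 0 and x′(t) = A x(t) + B (π(x(t)) + e(t)) for all t ≥ 0, one has ∫₀ᵀ |x(t)|² dt ≤ γ² ∫₀ᵀ |e(t)|² dt for every T ≥ 0. -/
/-!
`V(x) = xᵀ P x` is a storage function. By the mean value theorem each component of `π(x)` is
`∑ⱼ aᵢⱼ xⱼ` with `aᵢⱼ` a Jacobian entry, hence in `[ξ̲ᵢⱼ, ξ̄ᵢⱼ]`; with `qᵢⱼ = aᵢⱼ xⱼ` all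
S-procedure terms are nonnegative, so the certificate gives `V̇ ≤ γ |e|² − γ⁻¹ |x|²` along
trajectories. Integrating over `[0, T]` with `V(x(0)) = 0 ≤ V(x(T))` yields the gain bound.
-/

open Matrix Set

section Calculus

variable {ι κ : Type*} [Fintype ι]

theorem HasDerivAt.dotProduct {x y : ℝ → ι → ℝ} {x' y' : ι → ℝ} {t : ℝ}
    (hx : HasDerivAt x x' t) (hy : HasDerivAt y y' t) :
    HasDerivAt (fun s => x s ⬝ᵥ y s) (x' ⬝ᵥ y t + x t ⬝ᵥ y') t := by
  rw [hasDerivAt_pi] at hx hy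
  have h := HasDerivAt.fun_sum (u := Finset.univ) fun i _ => (hx i).mul (hy i)
  simp only [Finset.sum_add_distrib] at h
  exact h

theorem HasDerivAt.matrix_mulVec (M : Matrix κ ι ℝ) {x : ℝ → ι → ℝ} {x' : ι → ℝ} {t : ℝ}
    (hx : HasDerivAt x x' t) : HasDerivAt (fun s => M *ᵥ x s) (M *ᵥ x') t := by
  rw [hasDerivAt_pi] at hx ⊢
  exact fun i => HasDerivAt.fun_sum fun j _ => (hx j).const_mul (M i j)

theorem HasDerivAt.dotProduct_mulVec_self {P : Matrix ι ι ℝ} (hP : P.IsSymm)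
    {x : ℝ → ι → ℝ} {x' : ι → ℝ} {t : ℝ} (hx : HasDerivAt x x' t) :
    HasDerivAt (fun s => x s ⬝ᵥ P *ᵥ x s) (2 * (x t ⬝ᵥ P *ᵥ x')) t := by
  convert hx.dotProduct (hx.matrix_mulVec P) using 1
  rw [dotProduct_mulVec, dotProduct_comm, ← mulVec_transpose, hP, two_mul]

theorem exists_apply_eq_sum_fderiv_single_mul [Fintype κ] [DecidableEq ι] {f : (ι → ℝ) → κ → ℝ}
    (hf : Differentiable ℝ f) (hf0 : f 0 = 0) (y : ι → ℝ) (i : κ) :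
    ∃ z, f y i = ∑ j, fderiv ℝ f z (Pi.single j 1) i * y j := by
  obtain ⟨z, -, hz⟩ := domain_mvt (f := fun v => f v i)
    (f' := fun z => (ContinuousLinearMap.proj i).comp (fderiv ℝ f z))
    (fun z _ => ((ContinuousLinearMap.proj (R := ℝ) (φ := fun _ : κ => ℝ) i).hasFDerivAt.comp z
      (hf z).hasFDerivAt).hasFDerivWithinAt)
    convex_univ (mem_univ 0) (mem_univ y)
  refine ⟨z, ?_⟩
  have hz' : f y i = fderiv ℝ f z y i := by simpa [hf0] using hz
  rw [hz']
  conv_lhs => rw [pi_eq_sum_univ' y]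
  simp only [map_sum, map_smul, Finset.sum_apply, Pi.smul_apply, smul_eq_mul, mul_comm]

end Calculus

/-- The paper's S-procedure term `(c̄² − c²) y² + 2 c q y − q²`, with `c = (lo + hi) / 2` and
`c̄ = hi − c`; it encodes the sector constraint `q = a y`, `lo ≤ a ≤ hi`. -/
noncomputable def sectorForm (lo hi y q : ℝ) : ℝ :=
  ((hi - (lo + hi) / 2) ^ 2 - ((lo + hi) / 2) ^ 2) * y ^ 2 + 2 * ((lo + hi) / 2) * q * y - q ^ 2

theorem sectorForm_mul_nonneg {lo hi a : ℝ} (hlo : lo ≤ a) (hhi : a ≤ hi) (y : ℝ) :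
    0 ≤ sectorForm lo hi y (a * y) := by
  have h : sectorForm lo hi y (a * y) = y ^ 2 * ((hi - a) * (a - lo)) := by
    unfold sectorForm; ring
  rw [h]
  exact mul_nonneg (sq_nonneg y) (mul_nonneg (sub_nonneg.2 hhi) (sub_nonneg.2 hlo))

section Dissipation

variable {ι κ : Type*} [Fintype ι] [Fintype κ] [DecidableEq ι]

theorem exists_sum_eq_and_sectorForm_nonneg {f : (ι → ℝ) → κ → ℝ} {lo hi : κ → ι → ℝ}
    (hf : Differentiable ℝ f) (hf0 : f 0 = 0)
    (hbound : ∀ z i j, lo i j ≤ fderiv ℝ f z (Pi.single j 1) i ∧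
      fderiv ℝ f z (Pi.single j 1) i ≤ hi i j) (y : ι → ℝ) :
    ∃ q : κ → ι → ℝ, (fun i => ∑ j, q i j) = f y ∧
      ∀ i j, 0 ≤ sectorForm (lo i j) (hi i j) (y j) (q i j) := by
  choose z hz using exists_apply_eq_sum_fderiv_single_mul hf hf0 y
  exact ⟨fun i j => fderiv ℝ f (z i) (Pi.single j 1) i * y j, funext fun i => (hz i).symm,
    fun i j => sectorForm_mul_nonneg (hbound (z i) i j).1 (hbound (z i) i j).2 (y j)⟩

theorem two_dotProduct_mulVec_le_of_certificate {f : (ι → ℝ) → κ → ℝ} {lo hi lam : κ → ι → ℝ}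
    {A P : Matrix ι ι ℝ} {B : Matrix ι κ ℝ} {γ : ℝ}
    (hf : Differentiable ℝ f) (hf0 : f 0 = 0)
    (hbound : ∀ z i j, lo i j ≤ fderiv ℝ f z (Pi.single j 1) i ∧
      fderiv ℝ f z (Pi.single j 1) i ≤ hi i j)
    (hlam : ∀ i j, 0 ≤ lam i j)
    (hcert : ∀ (x : ι → ℝ) (q : κ → ι → ℝ) (e : κ → ℝ), (x, q, e) ≠ 0 →
      2 * (x ⬝ᵥ P *ᵥ (A *ᵥ x + B *ᵥ (fun i => ∑ j, q i j) + B *ᵥ e))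
        + (∑ i, ∑ j, lam i j * sectorForm (lo i j) (hi i j) (x j) (q i j))
        + γ⁻¹ * (∑ j, x j ^ 2) - γ * (∑ i, e i ^ 2) < 0)
    (x : ι → ℝ) (e : κ → ℝ) :
    2 * (x ⬝ᵥ P *ᵥ (A *ᵥ x + B *ᵥ (f x + e))) ≤ γ * (∑ i, e i ^ 2) - γ⁻¹ * (∑ j, x j ^ 2) := by
  obtain ⟨q, hq, hsector⟩ := exists_sum_eq_and_sectorForm_nonneg hf hf0 hbound x
  have hS : 0 ≤ ∑ i, ∑ j, lam i j * sectorForm (lo i j) (hi i j) (x j) (q i j) :=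
    Finset.sum_nonneg fun i _ => Finset.sum_nonneg fun j _ => mul_nonneg (hlam i j) (hsector i j)
  rw [mulVec_add B, ← add_assoc, ← hq]
  by_cases h0 : (x, q, e) = 0
  · simp only [Prod.mk_eq_zero] at h0
    obtain ⟨rfl, -, rfl⟩ := h0
    simp
  · linarith [hcert x q e h0]

end Dissipation

theorem integral_le_sq_mul_integral_of_dissipation {V V' f g : ℝ → ℝ} {γ T : ℝ}
    (hγ : 0 < γ) (hT : 0 ≤ T) (hV : ∀ t ∈ Icc 0 T, HasDerivAt V (V' t) t)
    (hV0 : V 0 = 0) (hVT : 0 ≤ V T)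
    (hf : IntervalIntegrable f MeasureTheory.volume 0 T)
    (hg : IntervalIntegrable g MeasureTheory.volume 0 T)
    (hdiss : ∀ t ∈ Ioo 0 T, V' t ≤ γ * g t - γ⁻¹ * f t) :
    ∫ t in 0..T, f t ≤ γ ^ 2 * ∫ t in 0..T, g t := by
  have hsupply : V T - V 0 ≤ ∫ t in 0..T, (γ * g t - γ⁻¹ * f t) :=
    intervalIntegral.sub_le_integral_of_hasDeriv_right_of_le hT
      (fun t ht => (hV t ht).continuousAt.continuousWithinAt)
      (fun t ht => (hV t (Ioo_subset_Icc_self ht)).hasDerivWithinAt)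
      ((intervalIntegrable_iff_integrableOn_Icc_of_le hT).1
        ((hg.const_mul γ).sub (hf.const_mul γ⁻¹)))
      hdiss
  rw [intervalIntegral.integral_sub (hg.const_mul γ) (hf.const_mul γ⁻¹),
    intervalIntegral.integral_const_mul, intervalIntegral.integral_const_mul] at hsupply
  have h : γ⁻¹ * ∫ t in 0..T, f t ≤ γ * ∫ t in 0..T, g t := by linarith
  rw [inv_mul_le_iff₀ hγ] at h
  linarith

theorem lti_stability_certificate_general
    (n m : ℕ)
    (A : Matrix (Fin n) (Fin n) ℝ) (B : Matrix (Fin n) (Fin m) ℝ)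
    (ξlo ξhi : Fin m → Fin n → ℝ)
    (pol : (Fin n → ℝ) → (Fin m → ℝ))
    (hdiff : Differentiable ℝ pol) (hpol0 : pol 0 = 0)
    (hgrad : ∀ x : Fin n → ℝ, ∀ i j,
      ξlo i j ≤ fderiv ℝ pol x (Pi.single j 1) i ∧
      fderiv ℝ pol x (Pi.single j 1) i ≤ ξhi i j)
    (P : Matrix (Fin n) (Fin n) ℝ) (hPsymm : P.IsSymm) (hPpsd : P.PosSemidef)
    (lam : Fin m → Fin n → ℝ) (hlam : ∀ i j, 0 ≤ lam i j)
    (γ : ℝ) (hγ : 0 < γ)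
    (hSDP : ∀ (x : Fin n → ℝ) (q : Fin m → Fin n → ℝ) (e : Fin m → ℝ),
      (x, q, e) ≠ 0 →
      2 * (x ⬝ᵥ P.mulVec
            (A.mulVec x + B.mulVec (fun i => ∑ j, q i j) + B.mulVec e))
        + (∑ i, ∑ j, lam i j *
            (((ξhi i j - (ξlo i j + ξhi i j) / 2) ^ 2 -
                ((ξlo i j + ξhi i j) / 2) ^ 2) * (x j) ^ 2
              + 2 * ((ξlo i j + ξhi i j) / 2) * q i j * x j - (q i j) ^ 2))
        + γ⁻¹ * (∑ j, (x j) ^ 2) - γ * (∑ i, (e i) ^ 2) < 0) :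
    ∀ e : ℝ → (Fin m → ℝ), ContinuousOn e (Set.Ici (0 : ℝ)) →
    ∀ x : ℝ → (Fin n → ℝ), x 0 = 0 →
    (∀ t ∈ Set.Ici (0 : ℝ),
      HasDerivAt x (A.mulVec (x t) + B.mulVec (pol (x t) + e t)) t) →
    ∀ T ≥ (0 : ℝ),
      (∫ t in (0 : ℝ)..T, ∑ j, (x t j) ^ 2)
        ≤ γ ^ 2 * ∫ t in (0 : ℝ)..T, ∑ i, (e t i) ^ 2 := by
  intro e he x hx0 hx T hT
  have hxc : ContinuousOn x (Icc 0 T) := fun t ht => (hx t ht.1).continuousAt.continuousWithinAt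
  have hec : ContinuousOn e (Icc 0 T) := he.mono fun t ht => ht.1
  refine integral_le_sq_mul_integral_of_dissipation hγ hT
    (fun t ht => (hx t ht.1).dotProduct_mulVec_self hPsymm) (by simp [hx0])
    (by simpa using hPpsd.dotProduct_mulVec_nonneg (x T))
    (ContinuousOn.intervalIntegrable_of_Icc hT (by fun_prop))
    (ContinuousOn.intervalIntegrable_of_Icc hT (by fun_prop))
    (fun t _ => two_dotProduct_mulVec_le_of_certificate hdiff hpol0 hgrad hlam hSDP (x t) (e t))

/-- Theorem 3.7, thm:lti_stable: if the SDP quadratic form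
(dissipation inequality form) is strictly negative on nonzero `(x, q, e)`,
then every trajectory of `x' = A x + B (π(x) + e)` starting at `0` satisfies
the finite `L₂`-gain bound `∫₀ᵀ |x|² ≤ γ² ∫₀ᵀ |e|²` for all `T ≥ 0`.
Here `c i j = (ξlo i j + ξhi i j)/2`, `cbar i j = ξhi i j - c i j`, and
`w i = ∑ j, q i j`. -/
theorem lti_stability_certificate
    (n m : ℕ) (hn : 0 < n) (hm : 0 < m)
    (A : Matrix (Fin n) (Fin n) ℝ) (B : Matrix (Fin n) (Fin m) ℝ)
    (ξlo ξhi : Fin m → Fin n → ℝ) (hξ : ∀ i j, ξlo i j ≤ ξhi i j)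
    (pol : (Fin n → ℝ) → (Fin m → ℝ))
    (hdiff : Differentiable ℝ pol) (hpol0 : pol 0 = 0)
    (hgrad : ∀ x : Fin n → ℝ, ∀ i j,
      ξlo i j ≤ fderiv ℝ pol x (Pi.single j 1) i ∧
      fderiv ℝ pol x (Pi.single j 1) i ≤ ξhi i j)
    (P : Matrix (Fin n) (Fin n) ℝ) (hPsymm : P.IsSymm) (hPpsd : P.PosSemidef)
    (lam : Fin m → Fin n → ℝ) (hlam : ∀ i j, 0 ≤ lam i j)
    (γ : ℝ) (hγ : 0 < γ)
    (hSDP : ∀ (x : Fin n → ℝ) (q : Fin m → Fin n → ℝ) (e : Fin m → ℝ),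
      (x, q, e) ≠ 0 →
      2 * (x ⬝ᵥ P.mulVec
            (A.mulVec x + B.mulVec (fun i => ∑ j, q i j) + B.mulVec e))
        + (∑ i, ∑ j, lam i j *
            (((ξhi i j - (ξlo i j + ξhi i j) / 2) ^ 2 -
                ((ξlo i j + ξhi i j) / 2) ^ 2) * (x j) ^ 2
              + 2 * ((ξlo i j + ξhi i j) / 2) * q i j * x j - (q i j) ^ 2))
        + γ⁻¹ * (∑ j, (x j) ^ 2) - γ * (∑ i, (e i) ^ 2) < 0) :
    ∀ e : ℝ → (Fin m → ℝ), ContinuousOn e (Set.Ici (0 : ℝ)) →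
    ∀ x : ℝ → (Fin n → ℝ), x 0 = 0 →
    (∀ t ∈ Set.Ici (0 : ℝ),
      HasDerivAt x (A.mulVec (x t) + B.mulVec (pol (x t) + e t)) t) →
    ∀ T ≥ (0 : ℝ),
      (∫ t in (0 : ℝ)..T, ∑ j, (x t j) ^ 2)
        ≤ γ ^ 2 * ∫ t in (0 : ℝ)..T, ∑ i, (e t i) ^ 2 :=
  lti_stability_certificate_general n m A B ξlo ξhi pol hdiff hpol0 hgrad P hPsymm hPpsd lam hlam γ
    hγ hSDP
end

section
/- Let H₀ be a real Hilbert space, let n, m be positive integers, and let H₁ be the Hilbert space of functions {1,…,n} → H₀ and H₂ the Hilbert space of functions {1,…,m}×{1,…,n} → H₀, each with the product inner product. Let G : H₂ → H₁ be a continuous linear map. Suppose q ∈ H₂ is nonzero, x = G q, and for all i ∈ {1,…,m}, j ∈ {1,…,n}: (c̄_{ij}² − c_{ij}²)‖x_j‖² + 2 c_{ij} ⟨q_{ij}, x_j⟩ − ‖q_{ij}‖² ≥ 0. Then x ≠ 0, and there exists a continuous linear map π̃ : H₁ → H₂ with π̃(x) = q and ‖π̃(y)‖ ≤ (‖q‖/‖x‖)‖y‖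 for all y ∈ H₁, such that the map id_{H₁} − G ∘ π̃ is not injective. -/
/-!
If `x = G q` vanished, each constraint would read `-‖q_{ij}‖² ≥ 0`, forcing `q = 0`; so `x ≠ 0`.
The rank-one operator `y ↦ (⟪x, y⟫ / ‖x‖²) • q` then sends `x` to `q`, has norm `‖q‖ / ‖x‖`,
and `x` is a nonzero fixed point of `G ∘ π̃`, i.e. a nonzero kernel vector of `id - G ∘ π̃`.
-/

open InnerProductSpace

section QuadraticConstraint

variable {E : Type*} [NormedAddCommGroup E] [InnerProductSpace ℝ E]

theorem eq_zero_of_quadratic_constraint_of_eq_zero {a b : ℝ} {u v : E}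
    (h : 0 ≤ a * ‖v‖ ^ 2 + b * inner ℝ u v - ‖u‖ ^ 2) (hv : v = 0) : u = 0 := by
  subst hv
  simp only [norm_zero, inner_zero_right] at h
  exact norm_eq_zero.mp (by nlinarith [norm_nonneg u])

theorem PiLp.eq_zero_of_quadratic_constraints_of_eq_zero {ι κ : Type*}
    {a b : ι → κ → ℝ} {q : PiLp 2 fun _ : ι × κ => E} {x : PiLp 2 fun _ : κ => E}
    (h : ∀ i j, 0 ≤ a i j * ‖x j‖ ^ 2 + b i j * inner ℝ (q (i, j)) (x j) - ‖q (i, j)‖ ^ 2)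
    (hx : x = 0) : q = 0 := by
  ext ⟨i, j⟩
  exact eq_zero_of_quadratic_constraint_of_eq_zero (h i j) (by rw [hx]; rfl)

end QuadraticConstraint

section MinNormRankOne

variable {E F : Type*} [NormedAddCommGroup E] [NormedSpace ℝ E]
  [NormedAddCommGroup F] [InnerProductSpace ℝ F]

/-- The operator `y ↦ (⟪x, y⟫ / ‖x‖²) • q`, of least norm among those sending `x` to `q`. -/
noncomputable def minNormRankOne (x : F) (q : E) : F →L[ℝ] E :=
  (‖x‖ ^ 2)⁻¹ • rankOne ℝ q x

theorem minNormRankOne_apply_self {x : F} (hx : x ≠ 0) (q : E) : minNormRankOne x q x = q := by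
  have : ‖x‖ ^ 2 ≠ 0 := by positivity
  simp only [minNormRankOne, smul_apply, rankOne_apply,
    real_inner_self_eq_norm_sq, smul_smul, inv_mul_cancel₀ this, one_smul]

theorem norm_minNormRankOne (x : F) (q : E) : ‖minNormRankOne x q‖ = ‖q‖ / ‖x‖ := by
  rw [minNormRankOne, norm_smul, norm_rankOne, norm_inv, norm_pow, norm_norm]
  rcases eq_or_ne ‖x‖ 0 with h | h
  · simp [h]
  · field_simp

theorem norm_minNormRankOne_apply_le (x : F) (q : E) (y : F) :
    ‖minNormRankOne x q y‖ ≤ ‖q‖ / ‖x‖ * ‖y‖ :=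
  norm_minNormRankOne x q ▸ (minNormRankOne x q).le_opNorm y

end MinNormRankOne

theorem ContinuousLinearMap.not_injective_sub_comp_of_apply_eq_self {R M N : Type*} [Ring R]
    [TopologicalSpace M] [AddCommGroup M] [Module R M]
    [TopologicalSpace N] [AddCommGroup N] [Module R N]
    (G : N →L[R] M) (π : M →L[R] N) {x : M} (hx : x ≠ 0) (hfix : G (π x) = x) :
    ¬ Function.Injective fun y => y - G (π y) :=
  fun hinj => hx <| hinj <| by simp only [hfix, sub_self, map_zero]

theorem robust_stability_excludes_constraint_signals_general
    (H₀ : Type*) [NormedAddCommGroup H₀] [InnerProductSpace ℝ H₀]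
    (n m : ℕ)
    (ξlo ξhi : Fin m → Fin n → ℝ)
    (G : (PiLp 2 fun _ : Fin m × Fin n => H₀) →L[ℝ]
          (PiLp 2 fun _ : Fin n => H₀))
    (q : PiLp 2 fun _ : Fin m × Fin n => H₀) (hq : q ≠ 0)
    (x : PiLp 2 fun _ : Fin n => H₀) (hx : x = G q)
    (hφ : ∀ (i : Fin m) (j : Fin n),
      0 ≤ ((ξhi i j - (ξlo i j + ξhi i j) / 2) ^ 2 -
            ((ξlo i j + ξhi i j) / 2) ^ 2) * ‖x j‖ ^ 2
          + 2 * ((ξlo i j + ξhi i j) / 2) * (inner ℝ (q (i, j)) (x j) : ℝ)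
          - ‖q (i, j)‖ ^ 2) :
    x ≠ 0 ∧
    ∃ polt : (PiLp 2 fun _ : Fin n => H₀) →L[ℝ]
        (PiLp 2 fun _ : Fin m × Fin n => H₀),
      polt x = q ∧
      (∀ y, ‖polt y‖ ≤ (‖q‖ / ‖x‖) * ‖y‖) ∧
      ¬ Function.Injective
        (fun y : PiLp 2 fun _ : Fin n => H₀ => y - G (polt y)) := by
  have hx0 : x ≠ 0 := fun h => hq (PiLp.eq_zero_of_quadratic_constraints_of_eq_zero hφ h)
  have hfix : minNormRankOne x q x = q := minNormRankOne_apply_self hx0 q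
  refine ⟨hx0, minNormRankOne x q, hfix, norm_minNormRankOne_apply_le x q, ?_⟩
  exact G.not_injective_sub_comp_of_apply_eq_self _ hx0 (by rw [hfix, hx])

/-- Lemma 3.7, contrapositive form: if a nonzero `q` with
`x = G q` satisfies all the quadratic constraints `φ_{ij}(x,q) ≥ 0`
(with `c i j = (ξlo i j + ξhi i j)/2` and `cbar i j = ξhi i j - c i j`), then
`x ≠ 0` and the explicit construction `π̃(y) = (⟨y,x⟩/‖x‖²) • q` yields a
continuous linear map with `π̃ x = q`, operator-norm bound `‖q‖/‖x‖`, and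
`id - G ∘ π̃` not injective. -/
theorem robust_stability_excludes_constraint_signals
    (H₀ : Type*) [NormedAddCommGroup H₀] [InnerProductSpace ℝ H₀]
    [CompleteSpace H₀]
    (n m : ℕ) (hn : 0 < n) (hm : 0 < m)
    (ξlo ξhi : Fin m → Fin n → ℝ) (hξ : ∀ i j, ξlo i j ≤ ξhi i j)
    (G : (PiLp 2 fun _ : Fin m × Fin n => H₀) →L[ℝ]
          (PiLp 2 fun _ : Fin n => H₀))
    (q : PiLp 2 fun _ : Fin m × Fin n => H₀) (hq : q ≠ 0)
    (x : PiLp 2 fun _ : Fin n => H₀) (hx : x = G q)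
    (hφ : ∀ (i : Fin m) (j : Fin n),
      0 ≤ ((ξhi i j - (ξlo i j + ξhi i j) / 2) ^ 2 -
            ((ξlo i j + ξhi i j) / 2) ^ 2) * ‖x j‖ ^ 2
          + 2 * ((ξlo i j + ξhi i j) / 2) * (inner ℝ (q (i, j)) (x j) : ℝ)
          - ‖q (i, j)‖ ^ 2) :
    x ≠ 0 ∧
    ∃ polt : (PiLp 2 fun _ : Fin n => H₀) →L[ℝ]
        (PiLp 2 fun _ : Fin m × Fin n => H₀),
      polt x = q ∧
      (∀ y, ‖polt y‖ ≤ (‖q‖ / ‖x‖) * ‖y‖) ∧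
      ¬ Function.Injective
        (fun y : PiLp 2 fun _ : Fin n => H₀ => y - G (polt y)) :=
  robust_stability_excludes_constraint_signals_general H₀ n m ξlo ξhi G q hq x hx hφ
end

section
/- Let H be a real Hilbert space, ι a finite index set, and for each i ∈ ι let T_i : H → H be a continuous linear operator. Let (U_k)_{k∈ℕ} be a sequence of linear isometries of H such that (a) ⟨T_i(U_k f), U_k g⟩ = ⟨T_i f, g⟩ for all f, g ∈ H, i ∈ ι, and k ∈ ℕ, and (b) ⟨f, U_k g⟩ → 0 as k → ∞ for all f, g ∈ H. Then the closure of the set Ψ = { (⟨q, T_i q⟩)_{i∈ι} : q ∈ H, ‖q‖ = 1 } ⊆ ℝ^ι is convex. -/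
/-!
Given unit vectors `f` and `g`, set `q k = √a • f + √b • U k g`. Since `U k g` tends weakly to
zero, the cross terms of `⟪q k, T i (q k)⟫` and of `‖q k‖ ^ 2` vanish in the limit, while the
invariance `(a)` keeps `⟪U k g, T i (U k g)⟫ = ⟪g, T i g⟫`. Hence the values of the normalised
vectors `q k / ‖q k‖` converge to `a • v + b • w`, where `v` and `w` are the values of `f` and `g`.
So the closure of `Ψ` contains every convex combination of two points of `Ψ`, which makes it convex.
-/

open Filter Topology
open scoped RealInnerProductSpace

theorem convex_closure_of_forall_combo_mem_closure {𝕜 E : Type*} [Semiring 𝕜] [PartialOrder 𝕜]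
    [AddCommMonoid E] [TopologicalSpace E] [ContinuousAdd E] [Module 𝕜 E]
    [ContinuousConstSMul 𝕜 E] {s : Set E}
    (h : ∀ x ∈ s, ∀ y ∈ s, ∀ a b : 𝕜, 0 ≤ a → 0 ≤ b → a + b = 1 → a • x + b • y ∈ closure s) :
    Convex 𝕜 (closure s) := by
  intro x hx y hy a b ha hb hab
  have hcombo : Continuous fun p : E × E => a • p.1 + b • p.2 := by fun_prop
  simpa only [closure_closure] using
    map_mem_closure₂ (f := fun x y => a • x + b • y) hcombo hx hy
      fun x hx y hy => h x hx y hy a b ha hb hab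

section InnerProductSpace

variable {H : Type*} [NormedAddCommGroup H] [InnerProductSpace ℝ H]

theorem tendsto_inner_map_smul_add_smul_of_weakly_tendsto_zero [CompleteSpace H]
    (A : H →L[ℝ] H) (f : H) {u : ℕ → H} {c : ℝ}
    (hu : ∀ x, Tendsto (fun k => ⟪x, u k⟫) atTop (𝓝 0))
    (hc : Tendsto (fun k => ⟪u k, A (u k)⟫) atTop (𝓝 c)) (s r : ℝ) :
    Tendsto (fun k => ⟪s • f + r • u k, A (s • f + r • u k)⟫) atTop
      (𝓝 (s ^ 2 * ⟪f, A f⟫ + r ^ 2 * c)) := by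
  have hexpand : ∀ k, ⟪s • f + r • u k, A (s • f + r • u k)⟫ =
      s ^ 2 * ⟪f, A f⟫ + s * r * (⟪A.adjoint f, u k⟫ + ⟪A f, u k⟫) + r ^ 2 * ⟪u k, A (u k)⟫ := by
    intro k
    simp only [map_add, map_smul, inner_add_left, inner_add_right, real_inner_smul_left,
      real_inner_smul_right, ContinuousLinearMap.adjoint_inner_left, real_inner_comm (A f)]
    ring
  have hcross := (hu (A.adjoint f)).add (hu (A f))
  simpa only [hexpand, add_zero, mul_zero] using
    (tendsto_const_nhds.add (tendsto_const_nhds.mul hcross)).add (tendsto_const_nhds.mul hc)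

variable {ι : Type*}

def quadraticFormValues (T : ι → H →L[ℝ] H) : Set (ι → ℝ) :=
  {rv | ∃ q : H, ‖q‖ = 1 ∧ rv = fun i => ⟪q, T i q⟫}

theorem inv_norm_sq_smul_mem_quadraticFormValues (T : ι → H →L[ℝ] H) {q : H} (hq : q ≠ 0) :
    (‖q‖ ^ 2)⁻¹ • (fun i => ⟪q, T i q⟫) ∈ quadraticFormValues T := by
  have hq' : ‖q‖ ≠ 0 := norm_ne_zero_iff.mpr hq
  refine ⟨‖q‖⁻¹ • q, by simp [norm_smul, hq'], ?_⟩
  ext i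
  simp only [Pi.smul_apply, smul_eq_mul, map_smul, real_inner_smul_left, real_inner_smul_right]
  ring

theorem mem_closure_quadraticFormValues_of_tendsto (T : ι → H →L[ℝ] H) {q : ℕ → H}
    {v : ι → ℝ} (hnorm : Tendsto (fun k => ‖q k‖ ^ 2) atTop (𝓝 1))
    (hval : ∀ i, Tendsto (fun k => ⟪q k, T i (q k)⟫) atTop (𝓝 (v i))) :
    v ∈ closure (quadraticFormValues T) := by
  have hlim : Tendsto (fun k => (‖q k‖ ^ 2)⁻¹ • fun i => ⟪q k, T i (q k)⟫) atTop (𝓝 v) := by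
    simpa only [inv_one, one_smul] using (hnorm.inv₀ one_ne_zero).smul (tendsto_pi_nhds.mpr hval)
  have hne : ∀ᶠ k in atTop, q k ≠ 0 := by
    filter_upwards [hnorm.eventually_ne one_ne_zero] with k hk hq
    simp [hq] at hk
  exact mem_closure_of_tendsto hlim
    (hne.mono fun k hk => inv_norm_sq_smul_mem_quadraticFormValues T hk)

end InnerProductSpace

theorem closure_of_quadratic_form_values_convex_general
    (H : Type*) [NormedAddCommGroup H] [InnerProductSpace ℝ H]
    [CompleteSpace H]
    (ι : Type*)
    (T : ι → H →L[ℝ] H)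
    (U : ℕ → H →ₗᵢ[ℝ] H)
    (ha : ∀ (i : ι) (k : ℕ) (f g : H),
      (inner ℝ (T i (U k f)) (U k g) : ℝ) = inner ℝ (T i f) g)
    (hb : ∀ f g : H,
      Filter.Tendsto (fun k => (inner ℝ f (U k g) : ℝ)) Filter.atTop (nhds 0)) :
    Convex ℝ (closure
      {rv : ι → ℝ | ∃ q : H, ‖q‖ = 1 ∧ rv = fun i => (inner ℝ q (T i q) : ℝ)}) := by
  refine convex_closure_of_forall_combo_mem_closure ?_
  rintro _ ⟨f, hf, rfl⟩ _ ⟨g, hg, rfl⟩ a b ha0 hb0 hab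
  have hmix : ∀ (A : H →L[ℝ] H), (∀ k, ⟪U k g, A (U k g)⟫ = ⟪g, A g⟫) →
      Tendsto (fun k => ⟪√a • f + √b • U k g, A (√a • f + √b • U k g)⟫) atTop
        (𝓝 (a * ⟪f, A f⟫ + b * ⟪g, A g⟫)) := fun A hA => by
    simpa only [Real.sq_sqrt ha0, Real.sq_sqrt hb0] using
      tendsto_inner_map_smul_add_smul_of_weakly_tendsto_zero A f (fun x => hb x g)
        (tendsto_const_nhds.congr fun k => (hA k).symm) √a √b
  refine mem_closure_quadraticFormValues_of_tendsto T (q := fun k => √a • f + √b • U k g)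
    (v := a • (fun i => ⟪f, T i f⟫) + b • fun i => ⟪g, T i g⟫) ?_ fun i => ?_
  · have hid := hmix (ContinuousLinearMap.id ℝ H) fun k => (U k).inner_map_map g g
    simpa only [ContinuousLinearMap.id_apply, real_inner_self_eq_norm_sq, hf, hg, one_pow,
      mul_one, hab] using hid
  · simpa using hmix (T i) fun k => by rw [real_inner_comm, ha, real_inner_comm]

/-- abstraction of Lemma 3.8: given continuous linear operators
`T i` on a real Hilbert space `H` and a sequence of linear isometries `U k`
commuting with each `T i` in the quadratic-form sense and vanishing weakly,
the closure of the set of quadratic-form values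
`{ (⟨q, T i q⟩)_i : ‖q‖ = 1 }` is convex. -/
theorem closure_of_quadratic_form_values_convex
    (H : Type*) [NormedAddCommGroup H] [InnerProductSpace ℝ H]
    [CompleteSpace H]
    (ι : Type*) [Fintype ι]
    (T : ι → H →L[ℝ] H)
    (U : ℕ → H →ₗᵢ[ℝ] H)
    (ha : ∀ (i : ι) (k : ℕ) (f g : H),
      (inner ℝ (T i (U k f)) (U k g) : ℝ) = inner ℝ (T i f) g)
    (hb : ∀ f g : H,
      Filter.Tendsto (fun k => (inner ℝ f (U k g) : ℝ)) Filter.atTop (nhds 0)) :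
    Convex ℝ (closure
      {rv : ι → ℝ | ∃ q : H, ‖q‖ = 1 ∧ rv = fun i => (inner ℝ q (T i q) : ℝ)}) :=
  closure_of_quadratic_form_values_convex_general H ι T U ha hb
end
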